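/- arXiv:2305.02136 — 2 statements merged into one kernel-verified Lean document; each statement's English description precedes it below -/
import Mathlib

section
/- Given a span of stock & flow diagrams (Y, ψ) ← (X, φ) → (Z, κ) in which both legs are surjective on flows, the presheaf pushout Z ⨿_X Y, equipped with flow functions γ_f = Σ_{x ∈ (p₂∘s₂)(Flow)⁻¹(f)} φ_x (equivalently Σ over (p₁∘s₁)(Flow)⁻¹(f)) for each flow f of the pushout, is the pushout of the span in the category of stock & flow diagrams. -/
/-- A primitive stock & flow diagram: a `FinSet`-valued presheaf on the schema
category `Fl` freely generated by the graph with objects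
Stock, Flow, Inflow, Outflow, Link, CTLink and arrows
up, out : Outflow → Stock, Flow; down, in : Inflow → Stock, Flow;
fl : Link → Flow; st : CTLink → Stock; ct : CTLink → Link.
Since `Fl` is free on this graph, such a functor is exactly the data below. -/
structure PrimSF where
  Stock : Type
  Flow : Type
  Inflow : Type
  Outflow : Type
  Link : Type
  CTLink : Type
  up : Outflow → Stock
  out : Outflow → Flow
  down : Inflow → Stock
  inn : Inflow → Flow
  fl : Link → Flow
  st : CTLink → Stock
  ct : CTLink → Link
  finStock : Finite Stock
  finFlow : Finite Flow
  finInflow : Finite Inflow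
  finOutflow : Finite Outflow
  finLink : Finite Link
  finCTLink : Finite CTLink

attribute [instance] PrimSF.finStock PrimSF.finFlow PrimSF.finInflow
  PrimSF.finOutflow PrimSF.finLink PrimSF.finCTLink

/-- The mono conditions: `X(in)`, `X(out)`, `X(ct)` are monomorphisms. -/
def PrimSF.Primitive (X : PrimSF) : Prop :=
  Function.Injective X.inn ∧ Function.Injective X.out ∧ Function.Injective X.ct

/-- A stock & flow diagram: a primitive stock & flow diagram together with a
continuous flow function `φ_f : ℝ^{X(fl)⁻¹(f)} → ℝ` for each flow `f`. -/
structure SF extends PrimSF where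
  prim : toPrimSF.Primitive
  phi : ∀ f : toPrimSF.Flow, ({l : toPrimSF.Link // toPrimSF.fl l = f} → ℝ) → ℝ
  phi_cont : ∀ f, Continuous (phi f)

/-- A morphism of presheaves on `Fl` (a natural transformation). -/
structure PrimHom (X Y : PrimSF) where
  stock : X.Stock → Y.Stock
  flow : X.Flow → Y.Flow
  inflow : X.Inflow → Y.Inflow
  outflow : X.Outflow → Y.Outflow
  link : X.Link → Y.Link
  ctlink : X.CTLink → Y.CTLink
  nat_up : ∀ o, Y.up (outflow o) = stock (X.up o)
  nat_out : ∀ o, Y.out (outflow o) = flow (X.out o)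
  nat_down : ∀ i, Y.down (inflow i) = stock (X.down i)
  nat_in : ∀ i, Y.inn (inflow i) = flow (X.inn i)
  nat_fl : ∀ l, Y.fl (link l) = flow (X.fl l)
  nat_st : ∀ c, Y.st (ctlink c) = stock (X.st c)
  nat_ct : ∀ c, Y.ct (ctlink c) = link (X.ct c)

/-- Composition of presheaf morphisms. -/
def PrimHom.comp {X Y Z : PrimSF} (G : PrimHom Y Z) (F : PrimHom X Y) : PrimHom X Z where
  stock := G.stock ∘ F.stock
  flow := G.flow ∘ F.flow
  inflow := G.inflow ∘ F.inflow
  outflow := G.outflow ∘ F.outflow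
  link := G.link ∘ F.link
  ctlink := G.ctlink ∘ F.ctlink
  nat_up := fun o => by simp only [Function.comp_apply, G.nat_up, F.nat_up]
  nat_out := fun o => by simp only [Function.comp_apply, G.nat_out, F.nat_out]
  nat_down := fun i => by simp only [Function.comp_apply, G.nat_down, F.nat_down]
  nat_in := fun i => by simp only [Function.comp_apply, G.nat_in, F.nat_in]
  nat_fl := fun l => by simp only [Function.comp_apply, G.nat_fl, F.nat_fl]
  nat_st := fun c => by simp only [Function.comp_apply, G.nat_st, F.nat_st]
  nat_ct := fun c => by simp only [Function.comp_apply, G.nat_ct, F.nat_ct]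

/-- The induced map on link fibers `F(Link) : X(fl)⁻¹(f) → Y(fl)⁻¹(g)` when
`F(Flow)(f) = g`, which exists by naturality along `fl : Link → Flow`. -/
def PrimHom.linkMap {X Y : PrimSF} (F : PrimHom X Y) {f : X.Flow} {g : Y.Flow}
    (hg : F.flow f = g) (l : {l : X.Link // X.fl l = f}) : {l' : Y.Link // Y.fl l' = g} :=
  ⟨F.link l.1, by rw [F.nat_fl, l.2, hg]⟩

/-- `F` is a morphism of stock & flow diagrams `(X, φ) → (Y, ψ)`: for every flow
`g` of `Y` with nonempty preimage, `ψ_g = Σ_{f ∈ F(Flow)⁻¹(g)} φ_f ∘ F(Link)*`,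
where `F(Link)*` is precomposition with the induced map on link fibers. -/
def IsSF (X Y : SF) (F : PrimHom X.toPrimSF Y.toPrimSF) : Prop :=
  ∀ g : Y.toPrimSF.Flow, (∃ f, F.flow f = g) →
    Y.phi g = fun x => ∑ᶠ f : {f : X.toPrimSF.Flow // F.flow f = g},
      X.phi f.1 (fun l => x (F.linkMap f.2 l))

/-- The pushout flow functions: `γ_f = Σ_{x ∈ F(Flow)⁻¹(f)} φ_x ∘ F(Link)*`,
where `F` is the composite `X → P` into the presheaf pushout. -/
noncomputable def pushPhi (X : SF) (P : PrimSF) (F : PrimHom X.toPrimSF P)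
    (f : P.Flow) (x : {l : P.Link // P.fl l = f} → ℝ) : ℝ :=
  ∑ᶠ g : {g : X.toPrimSF.Flow // F.flow g = f}, X.phi g.1 (fun l => x (F.linkMap g.2 l))

theorem pushPhi_cont (X : SF) (P : PrimSF) (F : PrimHom X.toPrimSF P) (f : P.Flow) :
    Continuous (pushPhi X P F f) := by
  haveI : Fintype {g : X.toPrimSF.Flow // F.flow g = f} := Fintype.ofFinite _
  have h : pushPhi X P F f = fun x => ∑ g : {g : X.toPrimSF.Flow // F.flow g = f},
      X.phi g.1 (fun l => x (F.linkMap g.2 l)) := by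
    funext x
    exact finsum_eq_sum_of_fintype _
  rw [h]
  exact continuous_finset_sum _ fun g _ =>
    (X.phi_cont _).comp (continuous_pi fun l => continuous_apply _)

/-- The presheaf pushout `Z ⨿_X Y` equipped with the pushout flow functions
`γ`, as a stock & flow diagram. -/
noncomputable def PushSF (X : SF) (P : PrimSF) (hP : P.Primitive)
    (F : PrimHom X.toPrimSF P) : SF where
  toPrimSF := P
  prim := hP
  phi := pushPhi X P F
  phi_cont := pushPhi_cont X P F

/-! ### Auxiliary material for `pushout_stockflow` -/

section PushoutAux

/-- Extensionality for `PrimHom`: the naturality fields are proofs. -/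
lemma PrimHom.ext' {X Y : PrimSF} {F G : PrimHom X Y}
    (h1 : F.stock = G.stock) (h2 : F.flow = G.flow) (h3 : F.inflow = G.inflow)
    (h4 : F.outflow = G.outflow) (h5 : F.link = G.link) (h6 : F.ctlink = G.ctlink) :
    F = G := by
  cases F; cases G
  cases h1; cases h2; cases h3; cases h4; cases h5; cases h6
  rfl

/-- Composition of presheaf morphisms is associative. -/
lemma PrimHom.comp_assoc {A B C D : PrimSF} (h : PrimHom C D) (g : PrimHom B C)
    (f : PrimHom A B) : (h.comp g).comp f = h.comp (g.comp f) :=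
  PrimHom.ext' rfl rfl rfl rfl rfl rfl

/-- The identity presheaf morphism. -/
def idHom (X : PrimSF) : PrimHom X X where
  stock := id
  flow := id
  inflow := id
  outflow := id
  link := id
  ctlink := id
  nat_up := fun _ => rfl
  nat_out := fun _ => rfl
  nat_down := fun _ => rfl
  nat_in := fun _ => rfl
  nat_fl := fun _ => rfl
  nat_st := fun _ => rfl
  nat_ct := fun _ => rfl

/-- Pointwise pushout of types. -/
def po {A B C : Type} (f : C → A) (g : C → B) : Type :=
  Quot (fun x y : A ⊕ B => ∃ c, x = Sum.inl (f c) ∧ y = Sum.inr (g c))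

instance po.finite {A B C : Type} [Finite A] [Finite B] (f : C → A) (g : C → B) :
    Finite (po f g) :=
  Finite.of_surjective (Quot.mk _) fun q => Quot.exists_rep q

/-- Functoriality of the pointwise pushout. -/
def poMap {A B C A' B' C' : Type} (f : C → A) (g : C → B) (f' : C' → A') (g' : C' → B')
    (hA : A → A') (hB : B → B') (hC : C → C')
    (h1 : ∀ c, hA (f c) = f' (hC c)) (h2 : ∀ c, hB (g c) = g' (hC c)) :
    po f g → po f' g' :=
  Quot.lift (fun x => Quot.mk _ (Sum.map hA hB x)) (by
    rintro _ _ ⟨c, rfl, rfl⟩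
    exact Quot.sound ⟨hC c, congrArg Sum.inl (h1 c), congrArg Sum.inr (h2 c)⟩)

/-- The pointwise presheaf pushout of a span. -/
def poSF {X Y Z : PrimSF} (s1 : PrimHom X Z) (s2 : PrimHom X Y) : PrimSF where
  Stock := po s1.stock s2.stock
  Flow := po s1.flow s2.flow
  Inflow := po s1.inflow s2.inflow
  Outflow := po s1.outflow s2.outflow
  Link := po s1.link s2.link
  CTLink := po s1.ctlink s2.ctlink
  up := poMap s1.outflow s2.outflow s1.stock s2.stock Z.up Y.up X.up s1.nat_up s2.nat_up
  out := poMap s1.outflow s2.outflow s1.flow s2.flow Z.out Y.out X.out s1.nat_out s2.nat_out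
  down := poMap s1.inflow s2.inflow s1.stock s2.stock Z.down Y.down X.down s1.nat_down s2.nat_down
  inn := poMap s1.inflow s2.inflow s1.flow s2.flow Z.inn Y.inn X.inn s1.nat_in s2.nat_in
  fl := poMap s1.link s2.link s1.flow s2.flow Z.fl Y.fl X.fl s1.nat_fl s2.nat_fl
  st := poMap s1.ctlink s2.ctlink s1.stock s2.stock Z.st Y.st X.st s1.nat_st s2.nat_st
  ct := poMap s1.ctlink s2.ctlink s1.link s2.link Z.ct Y.ct X.ct s1.nat_ct s2.nat_ct
  finStock := inferInstance
  finFlow := inferInstance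
  finInflow := inferInstance
  finOutflow := inferInstance
  finLink := inferInstance
  finCTLink := inferInstance

/-- The first leg into the pointwise pushout. -/
def poIn1 {X Y Z : PrimSF} (s1 : PrimHom X Z) (s2 : PrimHom X Y) :
    PrimHom Z (poSF s1 s2) where
  stock := fun a => Quot.mk _ (Sum.inl a)
  flow := fun a => Quot.mk _ (Sum.inl a)
  inflow := fun a => Quot.mk _ (Sum.inl a)
  outflow := fun a => Quot.mk _ (Sum.inl a)
  link := fun a => Quot.mk _ (Sum.inl a)
  ctlink := fun a => Quot.mk _ (Sum.inl a)
  nat_up := fun _ => rfl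
  nat_out := fun _ => rfl
  nat_down := fun _ => rfl
  nat_in := fun _ => rfl
  nat_fl := fun _ => rfl
  nat_st := fun _ => rfl
  nat_ct := fun _ => rfl

/-- The second leg into the pointwise pushout. -/
def poIn2 {X Y Z : PrimSF} (s1 : PrimHom X Z) (s2 : PrimHom X Y) :
    PrimHom Y (poSF s1 s2) where
  stock := fun a => Quot.mk _ (Sum.inr a)
  flow := fun a => Quot.mk _ (Sum.inr a)
  inflow := fun a => Quot.mk _ (Sum.inr a)
  outflow := fun a => Quot.mk _ (Sum.inr a)
  link := fun a => Quot.mk _ (Sum.inr a)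
  ctlink := fun a => Quot.mk _ (Sum.inr a)
  nat_up := fun _ => rfl
  nat_out := fun _ => rfl
  nat_down := fun _ => rfl
  nat_in := fun _ => rfl
  nat_fl := fun _ => rfl
  nat_st := fun _ => rfl
  nat_ct := fun _ => rfl

/-- The mediating morphism out of the pointwise pushout. -/
def poOut {X Y Z T : PrimSF} (s1 : PrimHom X Z) (s2 : PrimHom X Y)
    (t1 : PrimHom Z T) (t2 : PrimHom Y T) (h : t1.comp s1 = t2.comp s2) :
    PrimHom (poSF s1 s2) T where
  stock := Quot.lift (Sum.elim t1.stock t2.stock) (by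
    rintro _ _ ⟨c, rfl, rfl⟩; exact congrFun (congrArg PrimHom.stock h) c)
  flow := Quot.lift (Sum.elim t1.flow t2.flow) (by
    rintro _ _ ⟨c, rfl, rfl⟩; exact congrFun (congrArg PrimHom.flow h) c)
  inflow := Quot.lift (Sum.elim t1.inflow t2.inflow) (by
    rintro _ _ ⟨c, rfl, rfl⟩; exact congrFun (congrArg PrimHom.inflow h) c)
  outflow := Quot.lift (Sum.elim t1.outflow t2.outflow) (by
    rintro _ _ ⟨c, rfl, rfl⟩; exact congrFun (congrArg PrimHom.outflow h) c)
  link := Quot.lift (Sum.elim t1.link t2.link) (by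
    rintro _ _ ⟨c, rfl, rfl⟩; exact congrFun (congrArg PrimHom.link h) c)
  ctlink := Quot.lift (Sum.elim t1.ctlink t2.ctlink) (by
    rintro _ _ ⟨c, rfl, rfl⟩; exact congrFun (congrArg PrimHom.ctlink h) c)
  nat_up := by
    intro o
    induction o using Quot.ind with
    | _ x =>
      cases x with
      | inl z => exact t1.nat_up z
      | inr y => exact t2.nat_up y
  nat_out := by
    intro o
    induction o using Quot.ind with
    | _ x =>
      cases x with
      | inl z => exact t1.nat_out z
      | inr y => exact t2.nat_out y
  nat_down := by
    intro o
    induction o using Quot.ind with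
    | _ x =>
      cases x with
      | inl z => exact t1.nat_down z
      | inr y => exact t2.nat_down y
  nat_in := by
    intro o
    induction o using Quot.ind with
    | _ x =>
      cases x with
      | inl z => exact t1.nat_in z
      | inr y => exact t2.nat_in y
  nat_fl := by
    intro o
    induction o using Quot.ind with
    | _ x =>
      cases x with
      | inl z => exact t1.nat_fl z
      | inr y => exact t2.nat_fl y
  nat_st := by
    intro o
    induction o using Quot.ind with
    | _ x =>
      cases x with
      | inl z => exact t1.nat_st z
      | inr y => exact t2.nat_st y
  nat_ct := by
    intro o
    induction o using Quot.ind with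
    | _ x =>
      cases x with
      | inl z => exact t1.nat_ct z
      | inr y => exact t2.nat_ct y

/-- Decomposing a finite sum along the fibers of a map. -/
lemma finsum_fiber_decomp {α β : Type} [Finite α] [Finite β] (m : α → β) (f : α → ℝ) :
    ∑ᶠ a, f a = ∑ᶠ b, ∑ᶠ a : {a // m a = b}, f a.1 := by
  classical
  letI : Fintype α := Fintype.ofFinite α
  letI : Fintype β := Fintype.ofFinite β
  rw [finsum_eq_sum_of_fintype, finsum_eq_sum_of_fintype]
  simp only [finsum_eq_sum_of_fintype]
  exact (Fintype.sum_fiberwise m f).symm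

/-- Key fiberwise decomposition of sums indexed by the fiber of a composite. -/
lemma key_fiber {A B C : PrimSF} (F : PrimHom A B) (G : PrimHom B C)
    (φ : ∀ a : A.Flow, ({l : A.Link // A.fl l = a} → ℝ) → ℝ)
    (c : C.Flow) (x : {l : C.Link // C.fl l = c} → ℝ) :
    (∑ᶠ a : {a : A.Flow // (G.comp F).flow a = c},
        φ a.1 fun l => x ((G.comp F).linkMap a.2 l))
      = ∑ᶠ b : {b : B.Flow // G.flow b = c},
          ∑ᶠ a : {a : A.Flow // F.flow a = b.1},
            φ a.1 fun l => x (G.linkMap b.2 (F.linkMap a.2 l)) := by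
  rw [finsum_fiber_decomp (fun a : {a : A.Flow // (G.comp F).flow a = c} =>
    (⟨F.flow a.1, a.2⟩ : {b : B.Flow // G.flow b = c}))]
  refine finsum_congr fun b => ?_
  refine finsum_eq_of_bijective
    (fun p => (⟨p.1.1, congrArg Subtype.val p.2⟩ : {a : A.Flow // F.flow a = b.1}))
    ⟨?_, ?_⟩ ?_
  · intro p q h
    have h' : p.1.1 = q.1.1 :=
      congrArg (fun r : {a : A.Flow // F.flow a = b.1} => r.1) h
    exact Subtype.ext (Subtype.ext h')
  · intro a
    refine ⟨⟨⟨a.1, ?_⟩, Subtype.ext a.2⟩, rfl⟩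
    show G.flow (F.flow a.1) = c
    rw [a.2, b.2]
  · intro p
    rfl

/-- A composite of stock & flow morphisms whose first factor is surjective on
flows is a stock & flow morphism. -/
lemma isSF_comp {X Y W : SF} (s : PrimHom X.toPrimSF Y.toPrimSF)
    (q : PrimHom Y.toPrimSF W.toPrimSF) (hs : IsSF X Y s) (hq : IsSF Y W q)
    (hsurj : Function.Surjective s.flow) : IsSF X W (q.comp s) := by
  intro w hw
  obtain ⟨a, ha⟩ := hw
  rw [hq w ⟨s.flow a, ha⟩]
  funext x
  rw [key_fiber s q X.phi w x]
  exact finsum_congr fun b =>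
    congrFun (hs b.1 (hsurj b.1)) (fun l => x (q.linkMap b.2 l))

/-- A pushout leg is a stock & flow morphism into the pushout diagram. -/
lemma push_leg {X Y : SF} {P : PrimSF} (hP : P.Primitive)
    (s : PrimHom X.toPrimSF Y.toPrimSF) (p : PrimHom Y.toPrimSF P)
    (hs : IsSF X Y s) (hsurj : Function.Surjective s.flow) :
    IsSF Y (PushSF X P hP (p.comp s)) p := by
  intro g _
  funext x
  show pushPhi X P (p.comp s) g x = _
  simp only [pushPhi]
  rw [key_fiber s p X.phi g x]
  exact finsum_congr fun h =>
    (congrFun (hs h.1 (hsurj h.1)) (fun l => x (p.linkMap h.2 l))).symm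

end PushoutAux

/-- given a span `(Y,ψ) ← (X,φ) → (Z,κ)` of stock & flow diagram
morphisms whose legs are surjective on flows, the presheaf pushout `P = Z ⨿_X Y`
(expressed by its universal property among presheaf morphisms), equipped with
the pushout flow functions `γ`, is the pushout of the span in the category of
stock & flow diagrams: the legs `p₁, p₂` are stock & flow morphisms, and any
commuting cocone of stock & flow morphisms factors uniquely through a stock &
flow morphism out of `(P, γ)`. -/
theorem pushout_stockflow (X Y Z : SF)
    (s1 : PrimHom X.toPrimSF Z.toPrimSF) (s2 : PrimHom X.toPrimSF Y.toPrimSF)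
    (hs1 : IsSF X Z s1) (hs2 : IsSF X Y s2)
    (hsurj1 : Function.Surjective s1.flow) (hsurj2 : Function.Surjective s2.flow)
    (P : PrimSF) (hP : P.Primitive)
    (p1 : PrimHom Z.toPrimSF P) (p2 : PrimHom Y.toPrimSF P)
    (hcomm : p1.comp s1 = p2.comp s2)
    (huniv : ∀ (Q : PrimSF) (q1 : PrimHom Z.toPrimSF Q) (q2 : PrimHom Y.toPrimSF Q),
      q1.comp s1 = q2.comp s2 → ∃! e : PrimHom P Q, e.comp p1 = q1 ∧ e.comp p2 = q2) :
    IsSF Z (PushSF X P hP (p2.comp s2)) p1 ∧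
    IsSF Y (PushSF X P hP (p2.comp s2)) p2 ∧
    ∀ (W : SF) (q1 : PrimHom Z.toPrimSF W.toPrimSF) (q2 : PrimHom Y.toPrimSF W.toPrimSF),
      IsSF Z W q1 → IsSF Y W q2 → q1.comp s1 = q2.comp s2 →
      ∃! e : PrimHom P W.toPrimSF,
        IsSF (PushSF X P hP (p2.comp s2)) W e ∧ e.comp p1 = q1 ∧ e.comp p2 = q2 := by
    -- Joint surjectivity of the legs on flows, via the pointwise pushout.
  have hjs : ∀ g : P.Flow, (∃ z, p1.flow z = g) ∨ (∃ y, p2.flow y = g) := by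
    have hr : (poIn1 s1 s2).comp s1 = (poIn2 s1 s2).comp s2 := by
      refine PrimHom.ext' ?_ ?_ ?_ ?_ ?_ ?_ <;>
        exact funext fun c => Quot.sound ⟨c, rfl, rfl⟩
    obtain ⟨e, ⟨he1, he2⟩, _⟩ := huniv _ (poIn1 s1 s2) (poIn2 s1 s2) hr
    have hu1 : (poOut s1 s2 p1 p2 hcomm).comp (poIn1 s1 s2) = p1 :=
      PrimHom.ext' rfl rfl rfl rfl rfl rfl
    have hu2 : (poOut s1 s2 p1 p2 hcomm).comp (poIn2 s1 s2) = p2 :=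
      PrimHom.ext' rfl rfl rfl rfl rfl rfl
    have hid : (poOut s1 s2 p1 p2 hcomm).comp e = idHom P := by
      refine (huniv P p1 p2 hcomm).unique ⟨?_, ?_⟩ ⟨?_, ?_⟩
      · rw [PrimHom.comp_assoc, he1, hu1]
      · rw [PrimHom.comp_assoc, he2, hu2]
      · exact PrimHom.ext' rfl rfl rfl rfl rfl rfl
      · exact PrimHom.ext' rfl rfl rfl rfl rfl rfl
    intro g
    have hg : (poOut s1 s2 p1 p2 hcomm).flow (e.flow g) = g :=
      congrFun (congrArg PrimHom.flow hid) g
    obtain ⟨x, hx⟩ := Quot.exists_rep (e.flow g)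
    cases x with
    | inl z => exact Or.inl ⟨z, by rw [← hg, ← hx]; rfl⟩
    | inr y => exact Or.inr ⟨y, by rw [← hg, ← hx]; rfl⟩
  refine ⟨?_, ?_, ?_⟩
  · rw [← hcomm]
    exact push_leg hP s1 p1 hs1 hsurj1
  · exact push_leg hP s2 p2 hs2 hsurj2
  · intro W q1 q2 hq1 hq2 hq
    obtain ⟨e, ⟨he1, he2⟩, heu⟩ := huniv W.toPrimSF q1 q2 hq
    refine ⟨e, ⟨?_, he1, he2⟩, fun e' h' => heu e' ⟨h'.2.1, h'.2.2⟩⟩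
    intro w hw
    obtain ⟨g0, hg0⟩ := hw
    have hne : ∃ a, (q2.comp s2).flow a = w := by
      rcases hjs g0 with ⟨z, hz⟩ | ⟨y, hy⟩
      · have hq1z : q1.flow z = w := by
          rw [← he1]; show e.flow (p1.flow z) = w; rw [hz, hg0]
        obtain ⟨a, ha⟩ := hsurj1 z
        refine ⟨a, ?_⟩
        rw [← hq]
        show q1.flow (s1.flow a) = w
        rw [ha, hq1z]
      · have hq2y : q2.flow y = w := by
          rw [← he2]; show e.flow (p2.flow y) = w; rw [hy, hg0]
        obtain ⟨a, ha⟩ := hsurj2 y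
        refine ⟨a, ?_⟩
        show q2.flow (s2.flow a) = w
        rw [ha, hq2y]
    funext x
    show W.phi w x = ∑ᶠ g : {g : P.Flow // e.flow g = w},
      pushPhi X P (p2.comp s2) g.1 fun l => x (e.linkMap g.2 l)
    simp only [pushPhi]
    rw [← key_fiber (p2.comp s2) e X.phi w x, ← PrimHom.comp_assoc, he2]
    exact congrFun (isSF_comp s2 q2 hs2 hq2 hsurj2 w hne) x
end

section
/- In the colimit decomposition of a stock & flow diagram X into corollas and unit flows, the Flow component of the coequalizer is canonically isomorphic to X(Flow): it is the quotient of X(Inflow) ⨿ X(Outflow) by the equivalence relation identifying an inflow occurrence and an outflow occurrence whenever they map (under X(in) and X(out) respectively) to the same flow, and this quotient is in bijection with X(Flow). -/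
/-- in the colimit decomposition of `X` into corollas and unit
flows, the Flow component of the coequalizer is the quotient of
`X(Inflow) ⨿ X(Outflow)` by the relation identifying an inflow occurrence with
an outflow occurrence whenever they map (under `X(in)`, `X(out)`) to the same
flow; assuming every flow is an inflow or an outflow, this quotient is in
canonical bijection with `X(Flow)`. -/
theorem flow_component_of_coequalizer (X : SF)
    (hsurj : ∀ g : X.toPrimSF.Flow,
      (∃ i, X.toPrimSF.inn i = g) ∨ (∃ o, X.toPrimSF.out o = g)) :
    Function.Bijective
      (Quot.lift (Sum.elim X.toPrimSF.inn X.toPrimSF.out)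
        (by
          rintro a b ⟨i, o, rfl, rfl, hio⟩
          simpa using hio) :
        Quot (fun a b : X.toPrimSF.Inflow ⊕ X.toPrimSF.Outflow =>
          ∃ (i : X.toPrimSF.Inflow) (o : X.toPrimSF.Outflow),
            a = Sum.inl i ∧ b = Sum.inr o ∧ X.toPrimSF.inn i = X.toPrimSF.out o) →
        X.toPrimSF.Flow) := by
  obtain ⟨hinn, hout, -⟩ := X.prim
  constructor
  · rintro ⟨a⟩ ⟨b⟩ h
    rcases a with i | o <;> rcases b with i' | o' <;>
      simp only [Quot.lift_mk, Sum.elim_inl, Sum.elim_inr] at h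
    · exact congrArg _ (congrArg Sum.inl (hinn h))
    · exact Quot.sound ⟨i, o', rfl, rfl, h⟩
    · exact (Quot.sound ⟨i', o, rfl, rfl, h.symm⟩).symm
    · exact congrArg _ (congrArg Sum.inr (hout h))
  · intro g
    rcases hsurj g with ⟨i, hi⟩ | ⟨o, ho⟩
    · exact ⟨Quot.mk _ (Sum.inl i), hi⟩
    · exact ⟨Quot.mk _ (Sum.inr o), ho⟩
end
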